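/- Let N ≥ 1, s₀ > 0, and let n, m ≥ 1 be integers with n + m ≤ N. Assume that 1 + (∑_{i=1}^{k−1} j_k(i)·y_i + g_k·y_k)/N^H > 0 for every k ≤ n+m and every (y_1,…,y_k) ∈ {−1,1}^k. Then for every sign vector x ∈ {−1,1}^m one has S_{n+m}^{(N)}(−1,…,−1, x_1,…, x_m) ≤ S_n^{(N)}(−1,…,−1) · ∏_{k=1}^{m} (1 + B_n^N(k)/N^H), where B_n^N(k) := −∑_{i=1}^{n} j_{n+k}(i) + ∑_{i=n+1}^{n+k−1} j_{n+k}(i) + g_{n+k} (i.e., among all continuations of the all-down path of length n, the all-up continuation maximizes the stock price). -/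

import Mathlib

open MeasureTheory

/-- The normalizing constant `c_H`. -/
noncomputable def cH (H : ℝ) : ℝ :=
  Real.sqrt (2 * H * Real.Gamma (3/2 - H) / (Real.Gamma (H + 1/2) * Real.Gamma (2 - 2*H)))

/-- The coefficient `j_n(i)` of the disturbed random walk. -/
noncomputable def jn (H σ : ℝ) (n i : ℕ) : ℝ :=
  σ * cH H * (H - 1/2) *
    ∫ x in ((i : ℝ) - 1)..(i : ℝ),
      x ^ ((1:ℝ)/2 - H) *
        ∫ v in (0:ℝ)..1, (v + n - 1) ^ (H - 1/2) * (v + n - 1 - x) ^ (H - 3/2)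

/-- The coefficient `g_n` of the disturbed random walk. -/
noncomputable def gn (H σ : ℝ) (n : ℕ) : ℝ :=
  σ * cH H * (H - 1/2) *
    ∫ x in ((n : ℝ) - 1)..(n : ℝ),
      x ^ ((1:ℝ)/2 - H) * ((n : ℝ) - x) ^ (H - 1/2) *
        ∫ y in (0:ℝ)..1, (y * ((n : ℝ) - x) + x) ^ (H - 1/2) * y ^ (H - 3/2)

/-- The stock price in the `N`-fractional binary market after `n` steps along the
sign path `x` (indexed from 1):
`S_n^{(N)}(x) = s₀ ∏_{k=1}^n (1 + (∑_{i=1}^{k-1} j_k(i) x_i + g_k x_k)/N^H)`. -/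
noncomputable def Sp (H σ : ℝ) (N : ℕ) (s₀ : ℝ) (n : ℕ) (x : ℕ → ℝ) : ℝ :=
  s₀ * ∏ k ∈ Finset.Icc 1 n,
    (1 + ((∑ i ∈ Finset.Icc 1 (k - 1), jn H σ k i * x i) + gn H σ k * x k) / (N : ℝ) ^ H)

/-- The quantity `B_n^N(k) = -∑_{i=1}^{n} j_{n+k}(i) + ∑_{i=n+1}^{n+k-1} j_{n+k}(i) + g_{n+k}`. -/
noncomputable def Bfun (H σ : ℝ) (n N k : ℕ) : ℝ :=
  -(∑ i ∈ Finset.Icc 1 n, jn H σ (n + k) i)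
    + (∑ i ∈ Finset.Icc (n + 1) (n + k - 1), jn H σ (n + k) i)
    + gn H σ (n + k)

/-! The coefficients `j_k(i)` and `g_k` are integrals of nonnegative integrands multiplied by
`σ c_H (H - 1/2) ≥ 0`, so each factor of the price is monotone in the signs of the path. Since the
factors along the given path are positive, the whole product is monotone in the path, and the
largest path with prescribed first `n` signs is the one that goes up afterwards; its factors
after step `n` are exactly `1 + B_n^N(k)/N^H`. -/

open Finset

lemma cH_nonneg (H : ℝ) : 0 ≤ cH H := Real.sqrt_nonneg _

section

variable {H σ : ℝ}

lemma jn_nonneg (hH : 1/2 ≤ H) (hσ : 0 ≤ σ) {K i : ℕ} (hi : 1 ≤ i) (hiK : i < K) :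
    0 ≤ jn H σ K i := by
  have hi' : (1 : ℝ) ≤ i := by exact_mod_cast hi
  have hiK' : (i : ℝ) + 1 ≤ K := by exact_mod_cast hiK
  refine mul_nonneg (mul_nonneg (mul_nonneg hσ (cH_nonneg H)) (by linarith)) ?_
  refine intervalIntegral.integral_nonneg (by linarith) fun x ⟨hx₁, hx₂⟩ => ?_
  refine mul_nonneg (Real.rpow_nonneg (by linarith) _) ?_
  refine intervalIntegral.integral_nonneg zero_le_one fun v ⟨hv, _⟩ => ?_
  exact mul_nonneg (Real.rpow_nonneg (by linarith) _) (Real.rpow_nonneg (by linarith) _)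

lemma gn_nonneg (hH : 1/2 ≤ H) (hσ : 0 ≤ σ) {K : ℕ} (hK : 1 ≤ K) : 0 ≤ gn H σ K := by
  have hK' : (1 : ℝ) ≤ K := by exact_mod_cast hK
  refine mul_nonneg (mul_nonneg (mul_nonneg hσ (cH_nonneg H)) (by linarith)) ?_
  refine intervalIntegral.integral_nonneg (by linarith) fun x ⟨hx₁, hx₂⟩ => ?_
  refine mul_nonneg (mul_nonneg (Real.rpow_nonneg (by linarith) _)
    (Real.rpow_nonneg (by linarith) _)) ?_
  refine intervalIntegral.integral_nonneg zero_le_one fun y ⟨hy, _⟩ => ?_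
  exact mul_nonneg (Real.rpow_nonneg (by nlinarith) _) (Real.rpow_nonneg hy _)

end

noncomputable def priceIncrement (H σ : ℝ) (y : ℕ → ℝ) (k : ℕ) : ℝ :=
  (∑ i ∈ Icc 1 (k - 1), jn H σ k i * y i) + gn H σ k * y k

noncomputable def priceFactor (H σ : ℝ) (N : ℕ) (y : ℕ → ℝ) (k : ℕ) : ℝ :=
  1 + priceIncrement H σ y k / (N : ℝ) ^ H

def downThen (n : ℕ) (x : ℕ → ℝ) (i : ℕ) : ℝ :=
  if i ≤ n then -1 else x (i - n)

section

variable {H σ : ℝ} {N : ℕ} {s₀ : ℝ}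

lemma Sp_eq_mul_prod_priceFactor (n : ℕ) (y : ℕ → ℝ) :
    Sp H σ N s₀ n y = s₀ * ∏ k ∈ Icc 1 n, priceFactor H σ N y k :=
  rfl

lemma Sp_succ (n : ℕ) (y : ℕ → ℝ) :
    Sp H σ N s₀ (n + 1) y = Sp H σ N s₀ n y * priceFactor H σ N y (n + 1) := by
  simp only [Sp_eq_mul_prod_priceFactor, prod_Icc_succ_top (Nat.le_add_left 1 n), mul_assoc]

lemma Sp_add (n m : ℕ) (y : ℕ → ℝ) :
    Sp H σ N s₀ (n + m) y
      = Sp H σ N s₀ n y * ∏ k ∈ Icc 1 m, priceFactor H σ N y (n + k) := by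
  induction m with
  | zero => simp
  | succ m ih =>
    rw [← add_assoc, Sp_succ, ih, prod_Icc_succ_top (Nat.le_add_left 1 m), mul_assoc]
    rfl

lemma Sp_congr {n : ℕ} {x y : ℕ → ℝ} (h : ∀ i ∈ Icc 1 n, x i = y i) :
    Sp H σ N s₀ n x = Sp H σ N s₀ n y := by
  refine congrArg (s₀ * ·) (prod_congr rfl fun k hk => ?_)
  have hk := mem_Icc.1 hk
  have hsum : ∑ i ∈ Icc 1 (k - 1), jn H σ k i * x i = ∑ i ∈ Icc 1 (k - 1), jn H σ k i * y i :=
    sum_congr rfl fun i hi => by rw [h i (by simp only [mem_Icc] at hi ⊢; omega)]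
  rw [hsum, h k (mem_Icc.2 hk)]

lemma priceIncrement_mono (hH : 1/2 ≤ H) (hσ : 0 ≤ σ) {K : ℕ} (hK : 1 ≤ K) {y z : ℕ → ℝ}
    (hyz : ∀ i ∈ Icc 1 K, y i ≤ z i) : priceIncrement H σ y K ≤ priceIncrement H σ z K := by
  refine add_le_add (sum_le_sum fun i hi => ?_) ?_
  · have hi := mem_Icc.1 hi
    exact mul_le_mul_of_nonneg_left (hyz i (mem_Icc.2 ⟨hi.1, by omega⟩))
      (jn_nonneg hH hσ hi.1 (by omega))
  · exact mul_le_mul_of_nonneg_left (hyz K (mem_Icc.2 ⟨hK, le_rfl⟩)) (gn_nonneg hH hσ hK)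

lemma priceFactor_mono (hH : 1/2 ≤ H) (hσ : 0 ≤ σ) {K : ℕ} (hK : 1 ≤ K) {y z : ℕ → ℝ}
    (hyz : ∀ i ∈ Icc 1 K, y i ≤ z i) : priceFactor H σ N y K ≤ priceFactor H σ N z K := by
  unfold priceFactor
  gcongr
  exact priceIncrement_mono hH hσ hK hyz

lemma Sp_mono (hH : 1/2 ≤ H) (hσ : 0 ≤ σ) (hs₀ : 0 ≤ s₀) {n : ℕ} {y z : ℕ → ℝ}
    (hy : ∀ k ∈ Icc 1 n, 0 ≤ priceFactor H σ N y k) (hyz : ∀ i ∈ Icc 1 n, y i ≤ z i) :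
    Sp H σ N s₀ n y ≤ Sp H σ N s₀ n z := by
  refine mul_le_mul_of_nonneg_left (prod_le_prod hy fun k hk => ?_) hs₀
  have hk := mem_Icc.1 hk
  exact priceFactor_mono hH hσ hk.1 fun i hi =>
    hyz i (mem_Icc.2 ⟨(mem_Icc.1 hi).1, (mem_Icc.1 hi).2.trans hk.2⟩)

end

lemma downThen_of_le {n i : ℕ} {x : ℕ → ℝ} (hi : i ≤ n) : downThen n x i = -1 :=
  if_pos hi

lemma downThen_of_lt {n i : ℕ} {x : ℕ → ℝ} (hi : n < i) : downThen n x i = x (i - n) :=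
  if_neg hi.not_ge

lemma downThen_mono (n : ℕ) : Monotone (downThen n) := fun x y hxy i => by
  unfold downThen
  split_ifs
  exacts [le_rfl, hxy _]

lemma Bfun_eq_priceIncrement_downThen_one (H σ : ℝ) (n N : ℕ) {k : ℕ} (hk : 1 ≤ k) :
    Bfun H σ n N k = priceIncrement H σ (downThen n fun _ => 1) (n + k) := by
  obtain ⟨k, rfl⟩ := Nat.exists_eq_add_of_le' hk
  have hsplit : Icc 1 (n + k) = Icc 1 n ∪ Icc (n + 1) (n + k) := by
    ext i
    simp only [mem_union, mem_Icc]
    omega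
  have hdisj : Disjoint (Icc 1 n) (Icc (n + 1) (n + k)) :=
    disjoint_left.2 fun i hi hi' => by simp only [mem_Icc] at hi hi'; omega
  simp only [Bfun, priceIncrement, Nat.add_sub_cancel, ← add_assoc, hsplit, sum_union hdisj]
  have hdown : ∑ i ∈ Icc 1 n, jn H σ (n + k + 1) i * downThen n (fun _ => 1) i
      = -∑ i ∈ Icc 1 n, jn H σ (n + k + 1) i := by
    rw [← sum_neg_distrib]
    exact sum_congr rfl fun i hi => by rw [downThen_of_le (mem_Icc.1 hi).2, mul_neg_one]
  have hup : ∑ i ∈ Icc (n + 1) (n + k), jn H σ (n + k + 1) i * downThen n (fun _ => 1) i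
      = ∑ i ∈ Icc (n + 1) (n + k), jn H σ (n + k + 1) i :=
    sum_congr rfl fun i hi => by rw [downThen_of_lt (mem_Icc.1 hi).1, mul_one]
  rw [hdown, hup, downThen_of_lt (by omega), mul_one]

theorem all_up_maximizes_general (H σ : ℝ) (hH : H ∈ Set.Ioo (1/2 : ℝ) 1) (hσ : 0 < σ)
    (N n m : ℕ) (s₀ : ℝ) (hs₀ : 0 < s₀)
    (hpos : ∀ k : ℕ, 1 ≤ k → k ≤ n + m → ∀ y : ℕ → ℝ, (∀ i, y i = -1 ∨ y i = 1) →
      0 < 1 + ((∑ i ∈ Finset.Icc 1 (k - 1), jn H σ k i * y i) + gn H σ k * y k) / (N : ℝ) ^ H)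
    (x : ℕ → ℝ) (hx : ∀ i, x i = -1 ∨ x i = 1) :
    Sp H σ N s₀ (n + m) (fun i => if i ≤ n then -1 else x (i - n))
      ≤ Sp H σ N s₀ n (fun _ => -1)
          * ∏ k ∈ Finset.Icc 1 m, (1 + Bfun H σ n N k / (N : ℝ) ^ H) := by
  have hsign : ∀ i, downThen n x i = -1 ∨ downThen n x i = 1 := fun i => by
    unfold downThen
    split_ifs
    exacts [Or.inl rfl, hx _]
  have hx_le : x ≤ fun _ => 1 := fun i => by rcases hx i with h | h <;> simp [h]
  calc Sp H σ N s₀ (n + m) (downThen n x)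
      ≤ Sp H σ N s₀ (n + m) (downThen n fun _ => 1) :=
        Sp_mono hH.1.le hσ.le hs₀.le
          (fun k hk => (hpos k (mem_Icc.1 hk).1 (mem_Icc.1 hk).2 _ hsign).le)
          (fun i _ => downThen_mono n hx_le i)
    _ = Sp H σ N s₀ n (downThen n fun _ => 1)
          * ∏ k ∈ Icc 1 m, priceFactor H σ N (downThen n fun _ => 1) (n + k) := Sp_add n m _
    _ = _ := by
      rw [Sp_congr (y := fun _ => -1) fun i hi => downThen_of_le (mem_Icc.1 hi).2]
      congr 1
      refine prod_congr rfl fun k hk => ?_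
      rw [priceFactor, Bfun_eq_priceIncrement_downThen_one H σ n N (mem_Icc.1 hk).1]

/-- Among all continuations of the all-down path of length `n`, the all-up continuation
maximizes the stock price: for every sign vector `x ∈ {-1,1}^m`,
`S_{n+m}^{(N)}(-1,…,-1,x) ≤ S_n^{(N)}(-1,…,-1) ∏_{k=1}^m (1 + B_n^N(k)/N^H)`. -/
theorem all_up_maximizes (H σ : ℝ) (hH : H ∈ Set.Ioo (1/2 : ℝ) 1) (hσ : 0 < σ)
    (N n m : ℕ) (hn : 1 ≤ n) (hm : 1 ≤ m) (hNm : n + m ≤ N) (s₀ : ℝ) (hs₀ : 0 < s₀)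
    (hpos : ∀ k : ℕ, 1 ≤ k → k ≤ n + m → ∀ y : ℕ → ℝ, (∀ i, y i = -1 ∨ y i = 1) →
      0 < 1 + ((∑ i ∈ Finset.Icc 1 (k - 1), jn H σ k i * y i) + gn H σ k * y k) / (N : ℝ) ^ H)
    (x : ℕ → ℝ) (hx : ∀ i, x i = -1 ∨ x i = 1) :
    Sp H σ N s₀ (n + m) (fun i => if i ≤ n then -1 else x (i - n))
      ≤ Sp H σ N s₀ n (fun _ => -1)
          * ∏ k ∈ Finset.Icc 1 m, (1 + Bfun H σ n N k / (N : ℝ) ^ H) :=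
  all_up_maximizes_general H σ hH hσ N n m s₀ hs₀ hpos x hx
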